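/- Let θ ∈ (0, 1/2), y ∈ C([0,1], [0,∞)), α ≥ 0, βᵢ ≥ 0 with 0 < η₁ < ... < ηₙ < 1 and k := 1 − (α + Σᵢ βᵢ) > 0, and let u(t) = ∫₀¹ H(t,s) y(s) ds. Then for all t ∈ [θ, 1−θ], u(t) ≥ θ³(1−2θ) ∫₀¹ ((1 + α/k) e(s) + (1/k)Σᵢ βᵢ G(ηᵢ,s)) y(s) ds, where e(s) = (1/6)s(1−s)². -/

import Mathlib

/-!
For `t, s ∈ [0, 1]` the Green's function dominates `t³ e(s)`: when `s ≤ t`, the inequality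
`t - s ≤ t (1 - s)` gives `(t - s)³ ≤ (t - s) t² (1 - s)²`, hence `6 G(t,s) ≥ t² s (1 - s)²`; when
`t ≤ s` it is immediate. Integrating in `t` gives `∫₀¹ G(τ,s) dτ ≥ e(s)/4`. Since
`θ³(1 - 2θ) ≤ θ³ ≤ min(t³, 1/4)` for `t ≥ θ`, each of the three terms of `H(t,s)` dominates
`θ³(1 - 2θ)` times the corresponding term of the lower bound, and `y ≥ 0` lets us integrate.
-/

open Set intervalIntegral Filter

noncomputable def G (t s : ℝ) : ℝ :=
  if s ≤ t then (t^3*(1-s)^2 - (t-s)^3)/6 else t^3*(1-s)^2/6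

noncomputable def e (s : ℝ) : ℝ := s*(1-s)^2/6

noncomputable def H (α k : ℝ) {n : ℕ} (β η : Fin n → ℝ) (t s : ℝ) : ℝ :=
  G t s + (α/k) * (∫ τ in (0:ℝ)..1, G τ s) + (1/k) * ∑ i, β i * G (η i) s

lemma continuous_G : Continuous fun p : ℝ × ℝ => G p.1 p.2 := by
  unfold G
  refine Continuous.if_le (by fun_prop) (by fun_prop) continuous_snd continuous_fst ?_
  intro p hp
  rw [hp]
  ring

lemma continuous_G_right (t : ℝ) : Continuous (G t) :=
  continuous_G.comp (Continuous.prodMk_right t)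

lemma continuous_e : Continuous e := by
  unfold e
  fun_prop

lemma continuous_integral_G : Continuous fun s => ∫ τ in (0:ℝ)..1, G τ s :=
  continuous_parametric_intervalIntegral_of_continuous'
    (f := fun s τ => G τ s) (continuous_G.comp continuous_swap) 0 1

lemma continuous_H (α k : ℝ) {n : ℕ} (β η : Fin n → ℝ) (t : ℝ) : Continuous (H α k β η t) := by
  unfold H
  have := continuous_integral_G
  have := continuous_G_right
  fun_prop

lemma e_nonneg {s : ℝ} (hs : s ∈ Icc (0:ℝ) 1) : 0 ≤ e s := by
  unfold e
  have := hs.1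
  positivity

lemma pow_three_mul_e_le_G {t s : ℝ} (ht : t ∈ Icc (0:ℝ) 1) (hs : s ∈ Icc (0:ℝ) 1) :
    t^3 * e s ≤ G t s := by
  obtain ⟨ht0, ht1⟩ := ht
  obtain ⟨hs0, hs1⟩ := hs
  have hsq : 0 ≤ s * (1-s)^2 := by positivity
  unfold G e
  split_ifs with hst
  · have hd : t - s ≤ t * (1 - s) := by nlinarith
    have hcube : (t-s)^3 ≤ (t-s) * (t^2*(1-s)^2) := by
      have h2 : (t-s)^2 ≤ (t*(1-s))^2 := pow_le_pow_left₀ (by linarith) hd 2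
      nlinarith [mul_le_mul_of_nonneg_left h2 (sub_nonneg.2 hst)]
    have ht3 : t^3 ≤ t^2 := by nlinarith [pow_nonneg ht0 2]
    nlinarith [mul_le_mul_of_nonneg_right ht3 hsq]
  · nlinarith [mul_le_mul_of_nonneg_left hs1 (mul_nonneg (pow_nonneg ht0 3) (sq_nonneg (1-s)))]

lemma G_nonneg {t s : ℝ} (ht : t ∈ Icc (0:ℝ) 1) (hs : s ∈ Icc (0:ℝ) 1) : 0 ≤ G t s :=
  (mul_nonneg (pow_nonneg ht.1 3) (e_nonneg hs)).trans (pow_three_mul_e_le_G ht hs)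

lemma e_div_four_le_integral_G {s : ℝ} (hs : s ∈ Icc (0:ℝ) 1) :
    e s / 4 ≤ ∫ τ in (0:ℝ)..1, G τ s := by
  have hGs : Continuous fun τ => G τ s := continuous_G.comp (Continuous.prodMk_left s)
  calc e s / 4 = ∫ τ in (0:ℝ)..1, τ^3 * e s := by
        rw [intervalIntegral.integral_mul_const, integral_pow]
        ring
    _ ≤ ∫ τ in (0:ℝ)..1, G τ s :=
        intervalIntegral.integral_mono_on zero_le_one
          (((continuous_pow 3).mul continuous_const).intervalIntegrable 0 1)
          (hGs.intervalIntegrable 0 1) fun τ hτ => pow_three_mul_e_le_G hτ hs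

lemma lower_bound_le_H {c α k : ℝ} {n : ℕ} {β η : Fin n → ℝ} {t s : ℝ}
    (hα : 0 ≤ α) (hk : 0 < k) (hβ : ∀ i, 0 ≤ β i) (hη : ∀ i, η i ∈ Icc (0:ℝ) 1)
    (ht : t ∈ Icc (0:ℝ) 1) (hs : s ∈ Icc (0:ℝ) 1) (hct : c ≤ t^3) (hc : c ≤ 1/4) :
    c * ((1 + α/k) * e s + (1/k) * ∑ i, β i * G (η i) s) ≤ H α k β η t s := by
  have he := e_nonneg hs
  have hS : 0 ≤ ∑ i, β i * G (η i) s :=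
    Finset.sum_nonneg fun i _ => mul_nonneg (hβ i) (G_nonneg (hη i) hs)
  have hG : c * e s ≤ G t s :=
    (mul_le_mul_of_nonneg_right hct he).trans (pow_three_mul_e_le_G ht hs)
  have hint : c * e s ≤ ∫ τ in (0:ℝ)..1, G τ s :=
    (mul_le_mul_of_nonneg_right hc he).trans (by linarith [e_div_four_le_integral_G hs])
  have hαk : 0 ≤ α / k := div_nonneg hα hk.le
  have hk' : 0 ≤ 1 / k := by positivity
  unfold H
  nlinarith [mul_le_mul_of_nonneg_left hint hαk,
    mul_le_mul_of_nonneg_right (by linarith : c ≤ 1) (mul_nonneg hk' hS)]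

theorem stmt8_general (θ : ℝ) (hθ : θ ∈ Set.Ioo (0:ℝ) (1/2))
    (n : ℕ) (α : ℝ) (β η : Fin n → ℝ)
    (hα : 0 ≤ α) (hβ : ∀ i, 0 ≤ β i)
    (hη : ∀ i, η i ∈ Set.Ioo (0:ℝ) 1)
    (k : ℝ) (hk0 : 0 < k)
    (y : ℝ → ℝ) (hy : ContinuousOn y (Set.Icc 0 1))
    (hynn : ∀ t ∈ Set.Icc (0:ℝ) 1, 0 ≤ y t)
    (u : ℝ → ℝ) (hu : ∀ t, u t = ∫ s in (0:ℝ)..1, H α k β η t s * y s) :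
    ∀ t ∈ Set.Icc θ (1-θ),
      θ^3 * (1-2*θ) * ∫ s in (0:ℝ)..1,
        ((1 + α/k) * e s + (1/k) * ∑ i, β i * G (η i) s) * y s ≤ u t := by
  obtain ⟨hθ0, hθ1⟩ := hθ
  rintro t ⟨htθ, htθ'⟩
  have ht : t ∈ Icc (0:ℝ) 1 := ⟨by linarith, by linarith⟩
  have hθ3 : θ^3 * (1-2*θ) ≤ θ^3 := by nlinarith [pow_pos hθ0 3]
  have hct : θ^3 * (1-2*θ) ≤ t^3 := hθ3.trans (pow_le_pow_left₀ hθ0.le htθ 3)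
  have hc : θ^3 * (1-2*θ) ≤ 1/4 := hθ3.trans (by nlinarith [pow_le_pow_left₀ hθ0.le hθ1.le 3])
  have hyI : ContinuousOn y (uIcc 0 1) := by rwa [uIcc_of_le zero_le_one]
  have hlower : Continuous fun s => (1 + α/k) * e s + (1/k) * ∑ i, β i * G (η i) s := by
    have := continuous_e
    have := continuous_G_right
    fun_prop
  rw [hu t, ← intervalIntegral.integral_const_mul]
  refine intervalIntegral.integral_mono_on zero_le_one
    ((continuousOn_const.mul (hlower.continuousOn.mul hyI)).intervalIntegrable)
    (((continuous_H α k β η t).continuousOn.mul hyI).intervalIntegrable) fun s hs => ?_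
  rw [← mul_assoc]
  exact mul_le_mul_of_nonneg_right
    (lower_bound_le_H hα hk0 hβ (fun i => Ioo_subset_Icc_self (hη i)) ht hs hct hc) (hynn s hs)

theorem stmt8 (θ : ℝ) (hθ : θ ∈ Set.Ioo (0:ℝ) (1/2))
    (n : ℕ) (α : ℝ) (β η : Fin n → ℝ)
    (hα : 0 ≤ α) (hβ : ∀ i, 0 ≤ β i)
    (hηmono : StrictMono η) (hη : ∀ i, η i ∈ Set.Ioo (0:ℝ) 1)
    (k : ℝ) (hk : k = 1 - (α + ∑ i, β i)) (hk0 : 0 < k)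
    (y : ℝ → ℝ) (hy : ContinuousOn y (Set.Icc 0 1))
    (hynn : ∀ t ∈ Set.Icc (0:ℝ) 1, 0 ≤ y t)
    (u : ℝ → ℝ) (hu : ∀ t, u t = ∫ s in (0:ℝ)..1, H α k β η t s * y s) :
    ∀ t ∈ Set.Icc θ (1-θ),
      θ^3 * (1-2*θ) * ∫ s in (0:ℝ)..1,
        ((1 + α/k) * e s + (1/k) * ∑ i, β i * G (η i) s) * y s ≤ u t :=
  stmt8_general θ hθ n α β η hα hβ hη k hk0 y hy hynn u hu
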